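/- For every disturbance sequence ω, horizon N, and threshold k, the constrained occupation count of the original system (number of times t ≤ N with φ(t) ∈ 𝒯 and t earlier than the first exit time from 𝒳) equals the unconstrained occupation count of the switched system (number of times t ≤ N with φ̃(t) ∈ 𝒯). Consequently, P(N_𝒯(N) ≥ k) = P(Ñ_𝒯(N) ≥ k). -/
import Mathlib


open MeasureTheory Classical

/-- The constrained occupation count (visits to the target `𝒯` before the first exit
from the safe set `𝒳`) of the original system equals the unconstrained occupation
count of the switched system, pathwise; consequently the corresponding probabilities
of accumulating at least `k` visits coincide. -/
theorem constrained_occupation_eq_switched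
    {Ω S D : Type*} [MeasurableSpace Ω] (μ : Measure Ω) [IsProbabilityMeasure μ]
    (𝒳 𝒯 : Set S) (h𝒯𝒳 : 𝒯 ⊆ 𝒳)
    (f : S → D → S) (d : ℕ → Ω → D) (X₀ : S) (hX₀ : X₀ ∈ 𝒳)
    (φ φs : Ω → ℕ → S)
    (hφ0 : ∀ ω, φ ω 0 = X₀)
    (hφ : ∀ ω t, φ ω (t + 1) = f (φ ω t) (d t ω))
    (hφs0 : ∀ ω, φs ω 0 = X₀)
    (hφs : ∀ ω t, φs ω (t + 1) =
      if φs ω t ∈ 𝒳 then f (φs ω t) (d t ω) else φs ω t)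
    (N k : ℕ) :
    (∀ ω, (∑ t ∈ Finset.range (N + 1),
        (if φ ω t ∈ 𝒯 ∧ (∀ s ≤ t, φ ω s ∈ 𝒳) then 1 else 0))
      = ∑ t ∈ Finset.range (N + 1), (if φs ω t ∈ 𝒯 then 1 else 0)) ∧
    μ {ω | k ≤ ∑ t ∈ Finset.range (N + 1),
        (if φ ω t ∈ 𝒯 ∧ (∀ s ≤ t, φ ω s ∈ 𝒳) then 1 else 0)}
      = μ {ω | k ≤ ∑ t ∈ Finset.range (N + 1),
          (if φs ω t ∈ 𝒯 then 1 else 0)} := by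
  -- Lemma A: if the original trajectory stays safe up to time t, both agree.
  have lemA : ∀ ω t, (∀ s ≤ t, φ ω s ∈ 𝒳) → φs ω t = φ ω t := by
    intro ω t
    induction t with
    | zero => intro _; rw [hφs0, hφ0]
    | succ t ih =>
      intro h
      have ht : ∀ s ≤ t, φ ω s ∈ 𝒳 := fun s hs => h s (hs.trans (Nat.le_succ t))
      have heq := ih ht
      rw [hφs, heq, if_pos (ht t le_rfl), hφ]
  -- Lemma B: if the switched trajectory is safe at time t, then everything agrees up to t.
  have lemB : ∀ ω t, φs ω t ∈ 𝒳 → ∀ s ≤ t, φs ω s ∈ 𝒳 ∧ φs ω s = φ ω s := by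
    intro ω t
    induction t with
    | zero =>
      intro h s hs
      interval_cases s
      exact ⟨by rw [hφs0]; exact hX₀, by rw [hφs0, hφ0]⟩
    | succ t ih =>
      intro h s hs
      by_cases hmem : φs ω t ∈ 𝒳
      · have hall := ih hmem
        rcases eq_or_lt_of_le hs with h' | h'
        · subst h'
          refine ⟨h, ?_⟩
          rw [hφs, if_pos hmem, (hall t le_rfl).2, hφ]
        · exact hall s (Nat.lt_succ_iff.mp h')
      · exfalso
        rw [hφs, if_neg hmem] at h
        exact hmem h
  -- Key pointwise equivalence
  have key : ∀ ω t, ((φ ω t ∈ 𝒯 ∧ (∀ s ≤ t, φ ω s ∈ 𝒳)) ↔ φs ω t ∈ 𝒯) := by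
    intro ω t
    constructor
    · rintro ⟨h1, h2⟩
      rw [lemA ω t h2]; exact h1
    · intro h
      have hX : φs ω t ∈ 𝒳 := h𝒯𝒳 h
      have hall := lemB ω t hX
      refine ⟨by rw [← (hall t le_rfl).2]; exact h, fun s hs => ?_⟩
      rw [← (hall s hs).2]; exact (hall s hs).1
  have hsum : ∀ ω, (∑ t ∈ Finset.range (N + 1),
        (if φ ω t ∈ 𝒯 ∧ (∀ s ≤ t, φ ω s ∈ 𝒳) then 1 else 0))
      = ∑ t ∈ Finset.range (N + 1), (if φs ω t ∈ 𝒯 then 1 else 0) := by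
    intro ω
    refine Finset.sum_congr rfl fun t _ => ?_
    simp only [key ω t]
  refine ⟨hsum, ?_⟩
  congr 1
  ext ω
  simp only [Set.mem_setOf_eq, hsum ω]
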